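/- arXiv:1612.01013 — 5 statements merged into one kernel-verified Lean document; each statement's English description precedes it below -/
import Mathlib

section
/- For the extended CIR generator, setting κ = √((1/2 − θ/σ²)² + αβ(β−1)) + 1/2 − θ/σ², the pair λ = μκ + 2θμ/σ² and φ(x) = e^{−2μx/σ²} x^κ satisfies (1/2)σ²x φ''(x) + (θ+μx)φ'(x) − (1/2)αβ(β−1)σ²(1/x)φ(x) = −λφ(x) for all x > 0. -/
/-!
Write `φ = exp ∘ g` on `x > 0` with `g x = a x + κ log x`, `a = -2μ/σ²`, so that `φ' = φ g'` and
`φ'' = φ (g'² + g'')`. Dividing the equation by `φ` leaves a Laurent polynomial in `x`: the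
`x`-terms cancel by the choice of `a`, the constant term is `-λ`, and the coefficient of `1/x` is
`σ²/2 · (κ² - (1 - 2θ/σ²) κ - αβ(β-1))`, which vanishes since `κ` is a root of that quadratic.
-/

open Real Filter

section ExpMulRpow

variable (a κ : ℝ) {x : ℝ}

theorem hasDerivAt_exp_mul_rpow (hx : 0 < x) :
    HasDerivAt (fun y => exp (a * y) * y ^ κ) (exp (a * x) * x ^ κ * (a + κ / x)) x := by
  have hexp : HasDerivAt (fun y => exp (a * y)) (exp (a * x) * a) x := by
    simpa using ((hasDerivAt_id x).const_mul a).exp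
  have hpow : HasDerivAt (fun y => y ^ κ) (κ * x ^ (κ - 1)) x :=
    hasDerivAt_rpow_const (Or.inl hx.ne')
  refine (hexp.mul hpow).congr_deriv ?_
  rw [rpow_sub_one hx.ne']
  ring

theorem deriv_exp_mul_rpow_eventuallyEq (hx : 0 < x) :
    deriv (fun y => exp (a * y) * y ^ κ) =ᶠ[nhds x]
      fun y => exp (a * y) * y ^ κ * (a + κ / y) := by
  filter_upwards [Ioi_mem_nhds hx] with y hy
  exact (hasDerivAt_exp_mul_rpow a κ hy).deriv

theorem hasDerivAt_deriv_exp_mul_rpow (hx : 0 < x) :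
    HasDerivAt (deriv fun y => exp (a * y) * y ^ κ)
      (exp (a * x) * x ^ κ * ((a + κ / x) ^ 2 - κ / x ^ 2)) x := by
  have hinv : HasDerivAt (fun y => a + κ / y) (-κ / x ^ 2) x := by
    simpa [div_eq_mul_inv, neg_div] using ((hasDerivAt_inv hx.ne').const_mul κ).const_add a
  refine ((hasDerivAt_exp_mul_rpow a κ hx).mul hinv).congr_of_eventuallyEq
    (deriv_exp_mul_rpow_eventuallyEq a κ hx) |>.congr_deriv ?_
  ring

end ExpMulRpow

theorem sq_sub_two_mul_eq_of_eq_sqrt_add {b d κ : ℝ} (hbd : 0 ≤ b ^ 2 + d)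
    (hκ : κ = √(b ^ 2 + d) + b) : κ ^ 2 - 2 * b * κ = d := by
  have hsq : (κ - b) ^ 2 = b ^ 2 + d := by
    rw [hκ, add_sub_cancel_right, sq_sqrt hbd]
  linear_combination hsq

theorem ext_cir_eigenpair_general (μ σ θ α β : ℝ) (hσ : 0 < σ)
    (hα0 : 0 < α) (hβ : β * (β - 1) ≥ 0)
    (κ : ℝ) (hκ : κ = Real.sqrt ((1/2 - θ/σ^2)^2 + α*β*(β-1)) + 1/2 - θ/σ^2)
    (φ : ℝ → ℝ) (hφ : ∀ x, φ x = Real.exp (-(2*μ*x)/σ^2) * x ^ κ)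
    (lam : ℝ) (hlam : lam = μ * κ + 2*θ*μ/σ^2) :
    ∀ x > 0,
      (1/2) * σ^2 * x * deriv (deriv φ) x + (θ + μ * x) * deriv φ x
        - (1/2) * α * β * (β - 1) * σ^2 * (1/x) * φ x = -lam * φ x := by
  intro x hx
  have hquad : κ ^ 2 - 2 * (1/2 - θ/σ^2) * κ = α * β * (β - 1) := by
    refine sq_sub_two_mul_eq_of_eq_sqrt_add ?_ (by rw [hκ]; ring)
    rw [mul_assoc]
    exact add_nonneg (sq_nonneg _) (mul_nonneg hα0.le hβ)
  have hφ_eq : φ = fun y => exp ((-2 * μ / σ ^ 2) * y) * y ^ κ := by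
    funext y
    rw [hφ]
    congr 2
    ring
  rw [hφ_eq, (hasDerivAt_deriv_exp_mul_rpow _ κ hx).deriv,
    (hasDerivAt_exp_mul_rpow _ κ hx).deriv, hlam]
  field_simp
  linear_combination (norm := skip) σ ^ 4 * hquad
  field_simp
  ring

/-- Extended CIR eigenpair: with κ = √((1/2 − θ/σ²)² + αβ(β−1)) + 1/2 − θ/σ²,
the pair (μκ + 2θμ/σ², e^{−2μx/σ²} x^κ) solves the eigenvalue equation. -/
theorem ext_cir_eigenpair (μ σ θ α β : ℝ) (hμ : 0 < μ) (hσ : 0 < σ) (hθ : σ^2 ≤ θ)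
    (hα0 : 0 < α) (hα1 : α ≤ 1) (hβ : β * (β - 1) ≥ 0)
    (κ : ℝ) (hκ : κ = Real.sqrt ((1/2 - θ/σ^2)^2 + α*β*(β-1)) + 1/2 - θ/σ^2)
    (φ : ℝ → ℝ) (hφ : ∀ x, φ x = Real.exp (-(2*μ*x)/σ^2) * x ^ κ)
    (lam : ℝ) (hlam : lam = μ * κ + 2*θ*μ/σ^2) :
    ∀ x > 0,
      (1/2) * σ^2 * x * deriv (deriv φ) x + (θ + μ * x) * deriv φ x
        - (1/2) * α * β * (β - 1) * σ^2 * (1/x) * φ x = -lam * φ x :=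
  ext_cir_eigenpair_general μ σ θ α β hσ hα0 hβ κ hκ φ hφ lam hlam
end

section
/- For the 3/2 model generator, setting κ = √((1/2 + a/σ²)² + αβ(β−1)) − (1/2 + a/σ²), the pair λ = θκ and φ(x) = x^{−κ} satisfies (1/2)σ²x³φ''(x) + (θ−ax)xφ'(x) − (1/2)αβ(β−1)σ²xφ(x) = −λφ(x) for all x > 0. -/
/-!
Since `x ^ p` is an eigenfunction of the Euler operators `x d/dx` and `x² d²/dx²`, substituting
`φ = x ^ (-κ)` turns the equation into `x ^ (-κ) · (c₁ x + c₀)` with constants `c₀, c₁`.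
The term `c₀ = -θκ` is matched by `-λ`, and `c₁ = 0` is the quadratic equation
`κ² + (1 + 2a/σ²) κ = αβ(β-1)`, which `κ` solves by construction.
-/

theorem quadratic_eq_of_eq_sqrt_sub {b c k : ℝ} (h : 0 ≤ b ^ 2 + c)
    (hk : k = √(b ^ 2 + c) - b) : k ^ 2 + 2 * b * k = c := by
  subst hk
  linear_combination Real.sq_sqrt h

theorem mul_deriv_rpow_const (p : ℝ) {x : ℝ} (hx : x ≠ 0) :
    x * deriv (fun y : ℝ => y ^ p) x = p * x ^ p := by
  rw [Real.deriv_rpow_const, Real.rpow_sub_one hx]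
  field_simp

theorem sq_mul_deriv_deriv_rpow_const (p : ℝ) {x : ℝ} (hx : x ≠ 0) :
    x ^ 2 * deriv (deriv fun y : ℝ => y ^ p) x = p * (p - 1) * x ^ p := by
  rw [Real.deriv_rpow_const', deriv_const_mul_field, Real.deriv_rpow_const,
    Real.rpow_sub_one hx, Real.rpow_sub_one hx]
  field_simp

theorem three_halves_eigenpair_general (a θ σ α β : ℝ) (hσ : 0 < σ)
    (hα0 : 0 < α) (hβ : β * (β - 1) ≥ 0)
    (κ : ℝ) (hκ : κ = Real.sqrt ((1/2 + a/σ^2)^2 + α*β*(β-1)) - (1/2 + a/σ^2))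
    (φ : ℝ → ℝ) (hφ : ∀ x, φ x = x ^ (-κ))
    (lam : ℝ) (hlam : lam = θ * κ) :
    ∀ x > 0,
      (1/2) * σ^2 * x^3 * deriv (deriv φ) x + (θ - a * x) * x * deriv φ x
        - (1/2) * α * β * (β - 1) * σ^2 * x * φ x = -lam * φ x := by
  intro x hx
  have hquad : κ ^ 2 + 2 * (1/2 + a/σ^2) * κ = α*β*(β-1) := by
    refine quadratic_eq_of_eq_sqrt_sub ?_ hκ
    nlinarith [mul_nonneg hα0.le hβ]
  have hquad' : σ^2 * κ^2 + σ^2 * κ + 2 * a * κ = α*β*(β-1) * σ^2 := by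
    field_simp at hquad
    linear_combination hquad
  have hφ_eq : φ = fun y => y ^ (-κ) := funext hφ
  have h1 := mul_deriv_rpow_const (-κ) hx.ne'
  have h2 := sq_mul_deriv_deriv_rpow_const (-κ) hx.ne'
  rw [← hφ_eq] at h1 h2
  rw [hφ, hlam]
  linear_combination (1/2 * σ^2 * x) * h2 + (θ - a * x) * h1 + (1/2 * x * x ^ (-κ)) * hquad'

/-- 3/2 model eigenpair: with κ = √((1/2 + a/σ²)² + αβ(β−1)) − (1/2 + a/σ²),
the pair (θκ, x^{−κ}) solves the eigenvalue equation. -/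
theorem three_halves_eigenpair (a θ σ α β : ℝ) (ha : 0 < a) (hθ : 0 < θ) (hσ : 0 < σ)
    (hα0 : 0 < α) (hα1 : α ≤ 1) (hβ : β * (β - 1) ≥ 0)
    (κ : ℝ) (hκ : κ = Real.sqrt ((1/2 + a/σ^2)^2 + α*β*(β-1)) - (1/2 + a/σ^2))
    (φ : ℝ → ℝ) (hφ : ∀ x, φ x = x ^ (-κ))
    (lam : ℝ) (hlam : lam = θ * κ) :
    ∀ x > 0,
      (1/2) * σ^2 * x^3 * deriv (deriv φ) x + (θ - a * x) * x * deriv φ x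
        - (1/2) * α * β * (β - 1) * σ^2 * x * φ x = -lam * φ x :=
  three_halves_eigenpair_general a θ σ α β hσ hα0 hβ κ hκ φ hφ lam hlam
end

section
/- Let Λ(β) = rα(1−β) − θκ(β) where κ(β) = √((1/2 + a/σ²)² + αβ(β−1)) − (1/2 + a/σ²). If α ≥ θ²/r², then Λ'(β) < 0 for all β ∈ ℝ, so Λ is strictly decreasing. -/
/-!
Λ'(β) = -α (r + θ (2β - 1) / (2√Q(β))) with Q(β) = q + αβ(β - 1), q = (1/2 + a/σ²)².
Completing the square, 4Q(β) = (4q - α) + α(2β - 1)², where 4q - α = 4Q(1/2) > 0, so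
|θ (2β - 1)| ≤ r √α |2β - 1| < 2r √Q(β) once θ² ≤ r²α; hence Λ' < 0 everywhere.
-/

open Real

/-- The paper's `Λ` is `growthRate r θ α c² c` with `c = 1/2 + a/σ²`. -/
noncomputable def growthRate (r θ α q c β : ℝ) : ℝ :=
  r * α * (1 - β) - θ * (√(q + α * β * (β - 1)) - c)

section GrowthRate

variable {r θ α q c β : ℝ}

theorem hasDerivAt_sqrt_quadratic (hQ : 0 < q + α * β * (β - 1)) :
    HasDerivAt (fun β => √(q + α * β * (β - 1)))
      (α * (2 * β - 1) / (2 * √(q + α * β * (β - 1)))) β := by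
  have hquad : HasDerivAt (fun β => q + α * β * (β - 1)) (α * (2 * β - 1)) β := by
    have h := (((hasDerivAt_id β).const_mul α).mul ((hasDerivAt_id β).sub_const 1)).const_add q
    exact h.congr_deriv (by simp only [id]; ring)
  exact hquad.sqrt hQ.ne'

theorem hasDerivAt_growthRate (hQ : 0 < q + α * β * (β - 1)) :
    HasDerivAt (growthRate r θ α q c)
      (-(r * α) - θ * (α * (2 * β - 1) / (2 * √(q + α * β * (β - 1))))) β := by
  have h := (((hasDerivAt_id β).const_sub 1).const_mul (r * α)).sub
    (((hasDerivAt_sqrt_quadratic hQ).sub_const c).const_mul θ)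
  exact h.congr_deriv (by ring)

theorem mul_one_sub_two_mul_lt_sqrt (hr : 0 < r) (hθ : θ ^ 2 ≤ r ^ 2 * α) (hq : α < 4 * q) :
    θ * (1 - 2 * β) < 2 * r * √(q + α * β * (β - 1)) := by
  have hα : 0 ≤ α := nonneg_of_mul_nonneg_right ((sq_nonneg θ).trans hθ) (by positivity)
  have hQ : 0 ≤ q + α * β * (β - 1) := by nlinarith [sq_nonneg (2 * β - 1)]
  have hsq : (θ * (1 - 2 * β)) ^ 2 < (2 * r * √(q + α * β * (β - 1))) ^ 2 := by
    rw [mul_pow, mul_pow, sq_sqrt hQ]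
    nlinarith [mul_le_mul_of_nonneg_right hθ (sq_nonneg (1 - 2 * β)),
      mul_lt_mul_of_pos_left hq (pow_pos hr 2)]
  exact (le_abs_self _).trans_lt (abs_lt_of_sq_lt_sq hsq (by positivity))

theorem growthRate_deriv_neg (hr : 0 < r) (hα : 0 < α) (hθ : θ ^ 2 ≤ r ^ 2 * α)
    (hq : α < 4 * q) (β : ℝ) : deriv (growthRate r θ α q c) β < 0 := by
  have hQ : 0 < q + α * β * (β - 1) := by nlinarith [sq_nonneg (2 * β - 1)]
  rw [(hasDerivAt_growthRate hQ).deriv, mul_div_assoc',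
    sub_neg, neg_lt, ← neg_div, div_lt_iff₀ (by positivity)]
  nlinarith [mul_one_sub_two_mul_lt_sqrt (β := β) hr hθ hq]

end GrowthRate

theorem three_halves_decreasing_general (r a θ σ α : ℝ) (hr : 0 < r)
    (hα0 : 0 < α)
    (hpos : ∀ β : ℝ, 0 < (1/2 + a/σ^2)^2 + α*β*(β-1))
    (hcase : α ≥ θ^2 / r^2)
    (Λ : ℝ → ℝ)
    (hΛ : ∀ β, Λ β = r * α * (1 - β)
        - θ * (Real.sqrt ((1/2 + a/σ^2)^2 + α*β*(β-1)) - (1/2 + a/σ^2))) :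
    (∀ β : ℝ, deriv Λ β < 0) ∧ StrictAnti Λ := by
  have hθ : θ ^ 2 ≤ r ^ 2 * α := by
    rw [ge_iff_le, div_le_iff₀ (by positivity)] at hcase
    linarith
  have hq : α < 4 * (1/2 + a/σ^2)^2 := by linarith [hpos (1/2)]
  obtain rfl : Λ = growthRate r θ α ((1/2 + a/σ^2)^2) (1/2 + a/σ^2) := funext hΛ
  have hneg := growthRate_deriv_neg hr hα0 hθ hq (c := 1/2 + a/σ^2)
  exact ⟨hneg, strictAnti_of_deriv_neg hneg⟩

/-- Under the 3/2 model, if α ≥ θ²/r² then Λ(β) = rα(1−β) − θκ(β) has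
negative derivative everywhere and is strictly decreasing. -/
theorem three_halves_decreasing (r a θ σ α : ℝ) (hr : 0 < r) (ha : 0 < a)
    (hθ : 0 < θ) (hσ : 0 < σ) (hα0 : 0 < α) (hα1 : α ≤ 1)
    (hpos : ∀ β : ℝ, 0 < (1/2 + a/σ^2)^2 + α*β*(β-1))
    (hcase : α ≥ θ^2 / r^2)
    (Λ : ℝ → ℝ)
    (hΛ : ∀ β, Λ β = r * α * (1 - β)
        - θ * (Real.sqrt ((1/2 + a/σ^2)^2 + α*β*(β-1)) - (1/2 + a/σ^2))) :
    (∀ β : ℝ, deriv Λ β < 0) ∧ StrictAnti Λ :=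
  three_halves_decreasing_general r a θ σ α hr hα0 hpos hcase Λ hΛ
end

section
/- Let Λ(β) = rα(1−β) − θκ(β) with κ(β) = √((1/2 + a/σ²)² + αβ(β−1)) − (1/2 + a/σ²). If 0 < α < θ²/r², then Λ attains its maximum over β ∈ ℝ at β* = 1/2 − (1/2)√(((1 + 2a/σ²)² − α)/(θ²/r² − α)), and the expression under the square root is positive since α ≤ 1 < (1 + 2a/σ²)². -/
/-!
Completing the square, `p² + αβ(β - 1) = c² + α(β - 1/2)²` with `p = 1/2 + a/σ²` and
`c² = p² - α/4`, so up to a constant `-Λ(β)` is `αr x + θ √(c² + α x²)` with `x = β - 1/2`.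
With `w² = θ² - α r²`, Cauchy–Schwarz for the vectors `(c, √α x)` and `(w, -√α r)` (the latter
of norm `θ`) bounds this below by `c w`, with equality when the vectors are parallel, that is at
`x = -r c / w`, which is `β* - 1/2`.
-/

open Real

section CauchySchwarz

variable {α r c w θ : ℝ}

lemma mul_sub_mul_le_mul_sqrt (hα : 0 ≤ α) (hθ : 0 ≤ θ) (hθw : θ ^ 2 = w ^ 2 + α * r ^ 2)
    (x : ℝ) : c * w - α * r * x ≤ θ * √(c ^ 2 + α * x ^ 2) := by
  rw [← sqrt_sq hθ, ← sqrt_mul (sq_nonneg θ)]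
  refine (le_abs_self _).trans (abs_le_sqrt ?_)
  -- Lagrange's identity: the defect is `α (w x + r c)²`.
  rw [hθw]
  nlinarith [mul_nonneg hα (sq_nonneg (w * x + r * c))]

lemma mul_sub_mul_eq_mul_sqrt (hc : 0 ≤ c) (hθ : 0 ≤ θ) (hw : 0 < w)
    (hθw : θ ^ 2 = w ^ 2 + α * r ^ 2) :
    c * w - α * r * (-(r * c / w)) = θ * √(c ^ 2 + α * (-(r * c / w)) ^ 2) := by
  have hsq : c ^ 2 + α * (-(r * c / w)) ^ 2 = (c * θ / w) ^ 2 := by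
    field_simp
    linear_combination -c ^ 2 * hθw
  rw [hsq, sqrt_sq (by positivity)]
  field_simp
  linear_combination -c * hθw

end CauchySchwarz

lemma sqrt_div_div_sq_sub {A r θ α : ℝ} (hr : 0 < r) (hB : 0 < θ ^ 2 - α * r ^ 2) :
    √(A / (θ ^ 2 / r ^ 2 - α)) = r * √A / √(θ ^ 2 - α * r ^ 2) := by
  have : A / (θ ^ 2 / r ^ 2 - α) = r ^ 2 * A / (θ ^ 2 - α * r ^ 2) := by
    field_simp
  rw [this, sqrt_div' _ hB.le, sqrt_mul (sq_nonneg r), sqrt_sq hr.le]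

/-- Under the 3/2 model, if 0 < α < θ²/r² then Λ(β) = rα(1−β) − θκ(β) attains
its maximum at β* = 1/2 − (1/2)√(((1+2a/σ²)²−α)/(θ²/r²−α)), the expression
under the square root being positive. -/
theorem three_halves_optimal_leverage (r a θ σ α : ℝ) (hr : 0 < r) (ha : 0 < a)
    (hθ : 0 < θ) (hσ : 0 < σ) (hα0 : 0 < α) (hα1 : α ≤ 1)
    (hcase : α < θ^2 / r^2)
    (Λ : ℝ → ℝ)
    (hΛ : ∀ β, Λ β = r * α * (1 - β)
        - θ * (Real.sqrt ((1/2 + a/σ^2)^2 + α*β*(β-1)) - (1/2 + a/σ^2))) :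
    0 < ((1 + 2*a/σ^2)^2 - α) / (θ^2/r^2 - α) ∧
    ∀ β : ℝ, Λ β ≤ Λ (1/2 - (1/2) * Real.sqrt (((1 + 2*a/σ^2)^2 - α) / (θ^2/r^2 - α))) := by
  have hA : 0 < (1 + 2*a/σ^2)^2 - α := by
    have : 0 < 2*a/σ^2 := by positivity
    nlinarith
  have hB : 0 < θ ^ 2 - α * r ^ 2 := by
    have := (lt_div_iff₀ (by positivity)).mp hcase
    linarith
  refine ⟨div_pos hA (sub_pos.mpr hcase), ?_⟩
  rw [sqrt_div_div_sq_sub hr hB]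
  set s := √((1 + 2*a/σ^2)^2 - α)
  set w := √(θ ^ 2 - α * r ^ 2)
  have hθw : θ ^ 2 = w ^ 2 + α * r ^ 2 := by rw [sq_sqrt hB.le]; ring
  have hΛ' : ∀ β, Λ β = r * α / 2 + θ * (1/2 + a/σ^2)
      - (α * r * (β - 1/2) + θ * √((s / 2) ^ 2 + α * (β - 1/2) ^ 2)) := by
    intro β
    have hsq : (1/2 + a/σ^2)^2 + α*β*(β-1) = (s / 2) ^ 2 + α * (β - 1/2) ^ 2 := by
      rw [div_pow, sq_sqrt hA.le]
      ring
    rw [hΛ, hsq]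
    ring
  intro β
  rw [hΛ', hΛ', show 1/2 - 1/2 * (r * s / w) - 1/2 = -(r * (s / 2) / w) by ring]
  linarith [mul_sub_mul_le_mul_sqrt (c := s / 2) hα0.le hθ.le hθw (β - 1/2),
    mul_sub_mul_eq_mul_sqrt (c := s / 2) (by positivity) hθ.le (sqrt_pos.mpr hB) hθw]
end

section
/- For the inverse GARCH short rate generator, the pair λ = −(1/(2a²))αδ²(β−1)(αβ − α + a) + (1/a)α(β−1)(θ + αβδσρ) and φ(r) = r^{α(1−β)/a} satisfies (1/2)δ²r²φ''(r) + (θ + αβδσρ − ar)rφ'(r) − α(β−1)rφ(r) = −λφ(r) for all r > 0. -/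
lemma deriv_rpow_const_aux (c : ℝ) {r : ℝ} (hr : 0 < r) :
    deriv (fun x : ℝ => x ^ c) r = c * r ^ (c - 1) := by
  have := (Real.hasDerivAt_rpow_const (p := c) (Or.inl hr.ne')).deriv
  rw [this]

/-- Inverse GARCH short-rate eigenpair:
λ = −(1/(2a²))αδ²(β−1)(αβ−α+a) and φ(r) = r^{α(1−β)/a}
solve the eigenvalue equation for all r > 0. -/
theorem inv_garch_rate_eigenpair (a δ σ θ ρ α β : ℝ) (ha : 0 < a) (hδ : 0 < δ)
    (hσ : 0 < σ) (hθ : 0 < θ) (hρ : -1 ≤ ρ ∧ ρ ≤ 1) (hα0 : 0 < α) (hα1 : α ≤ 1)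
    (φ : ℝ → ℝ) (hφ : ∀ r : ℝ, φ r = r ^ (α*(1-β)/a))
    (lam : ℝ)
    (hlam : lam = -(1/(2*a^2))*α*δ^2*(β-1)*(α*β - α + a)
        + (1/a)*α*(β-1)*(θ + α*β*δ*σ*ρ)) :
    ∀ r : ℝ, r > 0 →
      (1/2) * δ^2 * r^2 * deriv (deriv φ) r + (θ + α*β*δ*σ*ρ - a*r) * r * deriv φ r
        - α*(β-1)*r * φ r = -lam * φ r := by
  intro r hr
  set c : ℝ := α*(1-β)/a with hc
  have hφf : φ = fun x : ℝ => x ^ c := funext hφ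
  have hd1 : deriv φ r = c * r ^ (c - 1) := by
    rw [hφf]; exact deriv_rpow_const_aux c hr
  have hev : deriv φ =ᶠ[nhds r] fun x : ℝ => c * x ^ (c - 1) := by
    filter_upwards [eventually_gt_nhds hr] with x hx
    rw [hφf]; exact deriv_rpow_const_aux c hx
  have hd2 : deriv (deriv φ) r = c * ((c - 1) * r ^ (c - 2)) := by
    rw [hev.deriv_eq, deriv_const_mul _ ((Real.hasDerivAt_rpow_const
      (p := c - 1) (Or.inl hr.ne')).differentiableAt)]
    rw [(Real.hasDerivAt_rpow_const (p := c - 1) (Or.inl hr.ne')).deriv]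
    ring_nf
  have h1 : r ^ (c - 1) = r ^ c / r := by
    rw [Real.rpow_sub hr, Real.rpow_one]
  have h2 : r ^ (c - 2) = r ^ c / r ^ 2 := by
    rw [Real.rpow_sub hr]
    norm_num
  rw [hd1, hd2, hφ, h1, h2, hlam, hc]
  field_simp
  ring
end
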